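/- Fix integers d ≥ 1 and 1 ≤ k ≤ d. If {i_1 < ... < i_k} is a uniformly random k-subset of {1,...,d} and F = 1/(d · ∏_{j=1}^k (d − i_j + 1)), then E[F] ≤ (1/d) · ((1 + log d)/d)^k. -/

import Mathlib

/-!
With `x i = 1 / (d - i + 1)`, the average of `F` over the `k`-subsets of `{1, …, d}` is
`(1 / d) · e_k(x) / C(d, k)`, where `e_k` is the `k`-th elementary symmetric function.
Maclaurin's inequality bounds `e_k(x) / C(d, k)` by `(e_1(x) / d) ^ k`, and `e_1(x)` is the
harmonic number `H_d ≤ 1 + log d`.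

Maclaurin's inequality follows by induction from `E_{k+1} ≤ E_1 E_k` for the normalized means
`E_k = e_k / C(n, k)`. Sorting the `(k + 2)`-subsets, and the terms of `e_1 e_{k+1}`, according to a
`k`-subset `U` they contain reduces this to Cauchy–Schwarz `(∑_C x)² ≤ |C| ∑_C x²` on each
complement `C = s \ U`.
-/

open Finset

@[simp]
theorem Multiset.esymm_zero {R : Type*} [CommSemiring R] (s : Multiset R) : s.esymm 0 = 1 := by
  simp [Multiset.esymm]

namespace Finset

variable {ι : Type*}

theorem esymm_map_val_one {R : Type*} [CommSemiring R] (x : ι → R) (s : Finset ι) :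
    (s.val.map x).esymm 1 = ∑ i ∈ s, x i := by
  simp [esymm_map_val, powersetCard_one]

theorem esymm_map_val_nonneg {R : Type*} [CommSemiring R] [PartialOrder R] [IsOrderedRing R]
    {x : ι → R} {s : Finset ι} (hx : ∀ i ∈ s, 0 ≤ x i) (k : ℕ) : 0 ≤ (s.val.map x).esymm k := by
  rw [esymm_map_val]
  exact sum_nonneg fun S hS ↦ prod_nonneg fun i hi ↦ hx i ((mem_powersetCard.1 hS).1 hi)

variable [DecidableEq ι]

theorem sum_powersetCard_succ_sum_erase {M : Type*} [AddCommMonoid M] (s : Finset ι) (k : ℕ)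
    (f : ι → Finset ι → M) :
    ∑ S ∈ s.powersetCard (k + 1), ∑ j ∈ S, f j (S.erase j)
      = ∑ U ∈ s.powersetCard k, ∑ j ∈ s \ U, f j U := by
  rw [sum_sigma', sum_sigma']
  refine sum_nbij' (fun p ↦ ⟨p.1.erase p.2, p.2⟩) (fun q ↦ ⟨insert q.2 q.1, q.2⟩)
    ?_ ?_ ?_ ?_ (fun _ _ ↦ rfl)
  · rintro ⟨S, j⟩ h
    simp only [mem_sigma, mem_powersetCard, mem_sdiff] at h ⊢
    obtain ⟨⟨hS, hcard⟩, hj⟩ := h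
    exact ⟨⟨(erase_subset _ _).trans hS, by rw [card_erase_of_mem hj, hcard]; rfl⟩, hS hj,
      notMem_erase _ _⟩
  · rintro ⟨U, j⟩ h
    simp only [mem_sigma, mem_powersetCard, mem_sdiff] at h ⊢
    obtain ⟨⟨hU, hcard⟩, hj, hjU⟩ := h
    exact ⟨⟨insert_subset hj hU, by rw [card_insert_of_notMem hjU, hcard]⟩, mem_insert_self _ _⟩
  · rintro ⟨S, j⟩ h
    simp only [mem_sigma] at h
    simp [insert_erase h.2]
  · rintro ⟨U, j⟩ h
    simp only [mem_sigma, mem_sdiff] at h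
    simp [erase_insert h.2.2]

section CommSemiring

variable {R : Type*} [CommSemiring R] (x : ι → R) (s : Finset ι)

theorem sum_mul_prod_erase_eq_card_mul_prod (S : Finset ι) :
    ∑ j ∈ S, x j * ∏ i ∈ S.erase j, x i = #S * ∏ i ∈ S, x i := by
  rw [sum_congr rfl fun j hj ↦ mul_prod_erase S x hj, sum_const, nsmul_eq_mul]

theorem succ_mul_esymm_map_val_succ (k : ℕ) :
    (k + 1) * (s.val.map x).esymm (k + 1)
      = ∑ U ∈ s.powersetCard k, (∏ i ∈ U, x i) * ∑ j ∈ s \ U, x j := by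
  simp_rw [mul_sum, mul_comm (∏ i ∈ _, x i),
    ← sum_powersetCard_succ_sum_erase s k (fun j U ↦ x j * ∏ i ∈ U, x i),
    sum_mul_prod_erase_eq_card_mul_prod, esymm_map_val, mul_sum]
  refine sum_congr rfl fun S hS ↦ ?_
  rw [(mem_powersetCard.1 hS).2]
  push_cast
  rfl

theorem esymm_map_val_one_mul_esymm_map_val_succ (k : ℕ) :
    (s.val.map x).esymm 1 * (s.val.map x).esymm (k + 1)
      = (k + 2) * (s.val.map x).esymm (k + 2)
        + ∑ U ∈ s.powersetCard k, (∏ i ∈ U, x i) * ∑ j ∈ s \ U, x j ^ 2 := by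
  have hsplit : ∀ S ∈ s.powersetCard (k + 1),
      (∏ i ∈ S, x i) * ∑ j ∈ s, x j
        = (∏ i ∈ S, x i) * ∑ j ∈ s \ S, x j + ∑ j ∈ S, x j ^ 2 * ∏ i ∈ S.erase j, x i := by
    intro S hS
    rw [← sum_sdiff (mem_powersetCard.1 hS).1, mul_add, mul_sum (s := S)]
    congr 1
    refine sum_congr rfl fun j hj ↦ ?_
    rw [← mul_prod_erase S x hj]
    ring
  rw [esymm_map_val_one, mul_comm, esymm_map_val, sum_mul, sum_congr rfl hsplit, sum_add_distrib,
    ← succ_mul_esymm_map_val_succ x s (k + 1),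
    sum_powersetCard_succ_sum_erase s k (fun j U ↦ x j ^ 2 * ∏ i ∈ U, x i)]
  simp_rw [mul_sum, mul_comm (∏ i ∈ _, x i)]
  push_cast
  ring

theorem succ_mul_succ_mul_esymm_map_val_add (k : ℕ) :
    (k + 1) * ((k + 2) * (s.val.map x).esymm (k + 2))
        + ∑ U ∈ s.powersetCard k, (∏ i ∈ U, x i) * ∑ j ∈ s \ U, x j ^ 2
      = ∑ U ∈ s.powersetCard k, (∏ i ∈ U, x i) * (∑ j ∈ s \ U, x j) ^ 2 := by
  -- Each `(k + 2)`-subset is counted once per ordered pair `(i, j)` of its elements, which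
  -- leaves the `k`-subset `U` obtained by removing both.
  have hpairs : (k + 1) * ((k + 2) * (s.val.map x).esymm (k + 2))
      = ∑ U ∈ s.powersetCard k, (∏ i ∈ U, x i) * ∑ i ∈ s \ U, x i * ∑ j ∈ (s \ U).erase i, x j := by
    have h := succ_mul_esymm_map_val_succ x s (k + 1)
    push_cast at h
    rw [add_assoc, one_add_one_eq_two] at h
    calc (k + 1) * ((k + 2) * (s.val.map x).esymm (k + 2))
        = ∑ S ∈ s.powersetCard (k + 1), (k + 1) * ((∏ i ∈ S, x i) * ∑ j ∈ s \ S, x j) := by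
          rw [h, mul_sum]
      _ = ∑ S ∈ s.powersetCard (k + 1), ∑ i ∈ S,
            x i * ((∏ j ∈ S.erase i, x j) * ∑ j ∈ s \ insert i (S.erase i), x j) := by
          refine sum_congr rfl fun S hS ↦ ?_
          have hterm : ∀ i ∈ S,
              x i * ((∏ j ∈ S.erase i, x j) * ∑ j ∈ s \ insert i (S.erase i), x j)
                = x i * (∏ j ∈ S.erase i, x j) * ∑ j ∈ s \ S, x j := fun i hi ↦ by
            rw [insert_erase hi, mul_assoc]
          rw [sum_congr rfl hterm, ← sum_mul, sum_mul_prod_erase_eq_card_mul_prod,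
            (mem_powersetCard.1 hS).2]
          push_cast
          ring
      _ = ∑ U ∈ s.powersetCard k, ∑ i ∈ s \ U,
            x i * ((∏ j ∈ U, x j) * ∑ j ∈ s \ insert i U, x j) :=
          sum_powersetCard_succ_sum_erase s k
            (fun i U ↦ x i * ((∏ j ∈ U, x j) * ∑ j ∈ s \ insert i U, x j))
      _ = _ := by
          refine sum_congr rfl fun U _ ↦ ?_
          rw [mul_sum]
          refine sum_congr rfl fun i _ ↦ ?_
          rw [sdiff_insert]
          ring
  have hsquare : ∀ C : Finset ι,
      ∑ i ∈ C, x i * ∑ j ∈ C.erase i, x j + ∑ j ∈ C, x j ^ 2 = (∑ j ∈ C, x j) ^ 2 := by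
    intro C
    rw [← sum_add_distrib, sq, sum_mul]
    refine sum_congr rfl fun i hi ↦ ?_
    rw [← add_sum_erase C x hi]
    ring
  rw [hpairs, ← sum_add_distrib]
  simp_rw [← mul_add, hsquare]

end CommSemiring

section LinearOrderedCommRing

variable {R : Type*} [CommRing R] [LinearOrder R] [IsStrictOrderedRing R] {x : ι → R}
  {s : Finset ι}

theorem card_mul_esymm_map_val_le (hx : ∀ i ∈ s, 0 ≤ x i) (k : ℕ) :
    (#s : R) * ((k + 2) * (s.val.map x).esymm (k + 2))
      ≤ (#s - (k + 1)) * ((s.val.map x).esymm 1 * (s.val.map x).esymm (k + 1)) := by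
  have hCS : ∑ U ∈ s.powersetCard k, (∏ i ∈ U, x i) * (∑ j ∈ s \ U, x j) ^ 2
      ≤ (#s - k) * ∑ U ∈ s.powersetCard k, (∏ i ∈ U, x i) * ∑ j ∈ s \ U, x j ^ 2 := by
    rw [mul_sum]
    refine sum_le_sum fun U hU ↦ ?_
    obtain ⟨hUs, hUk⟩ := mem_powersetCard.1 hU
    have hcard : (#(s \ U) : R) = #s - k := by
      rw [eq_sub_iff_add_eq, ← hUk]
      exact_mod_cast card_sdiff_add_card_eq_card hUs
    rw [mul_left_comm, ← hcard]
    exact mul_le_mul_of_nonneg_left sq_sum_le_card_mul_sum_sq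
      (prod_nonneg fun i hi ↦ hx i (hUs hi))
  rw [esymm_map_val_one_mul_esymm_map_val_succ]
  linear_combination succ_mul_succ_mul_esymm_map_val_add x s k + hCS

end LinearOrderedCommRing

section LinearOrderedField

variable {R : Type*} [Field R] [LinearOrder R] [IsStrictOrderedRing R] {x : ι → R}
  {s : Finset ι}

theorem esymm_map_val_succ_div_choose_le (hx : ∀ i ∈ s, 0 ≤ x i) (k : ℕ) :
    (s.val.map x).esymm (k + 1) / (#s).choose (k + 1)
      ≤ (∑ i ∈ s, x i) / #s * ((s.val.map x).esymm k / (#s).choose k) := by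
  obtain _ | k := k
  · simp [esymm_map_val_one]
  obtain hsk | hks := lt_or_ge #s (k + 2)
  · rw [Nat.choose_eq_zero_of_lt hsk, Nat.cast_zero, div_zero]
    exact mul_nonneg (div_nonneg (sum_nonneg hx) (Nat.cast_nonneg _))
      (div_nonneg (esymm_map_val_nonneg hx _) (Nat.cast_nonneg _))
  have hchoose : ((#s).choose (k + 2) : R) * (k + 2) = (#s).choose (k + 1) * (#s - (k + 1)) := by
    have h := Nat.choose_succ_right_eq #s (k + 1)
    rw [← Nat.cast_inj (R := R), Nat.cast_mul, Nat.cast_mul, Nat.cast_sub (by omega)] at h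
    push_cast at h
    rw [← h]
    ring
  have hn : (0 : R) < #s := by exact_mod_cast (show 0 < #s by omega)
  have hC₁ : (0 : R) < (#s).choose (k + 1) := by exact_mod_cast Nat.choose_pos (by omega)
  have hC₂ : (0 : R) < (#s).choose (k + 2) := by exact_mod_cast Nat.choose_pos hks
  rw [div_mul_div_comm, div_le_div_iff₀ hC₂ (mul_pos hn hC₁)]
  refine le_of_mul_le_mul_left ?_ (by positivity : (0 : R) < k + 2)
  calc (k + 2) * ((s.val.map x).esymm (k + 2) * (#s * (#s).choose (k + 1)))
      = (#s).choose (k + 1) * (#s * ((k + 2) * (s.val.map x).esymm (k + 2))) := by ring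
    _ ≤ (#s).choose (k + 1)
          * ((#s - (k + 1)) * ((s.val.map x).esymm 1 * (s.val.map x).esymm (k + 1))) :=
        mul_le_mul_of_nonneg_left (card_mul_esymm_map_val_le hx k) hC₁.le
    _ = _ := by
        rw [esymm_map_val_one]
        linear_combination (∑ i ∈ s, x i) * (s.val.map x).esymm (k + 1) * hchoose.symm

theorem esymm_map_val_div_choose_le_pow (hx : ∀ i ∈ s, 0 ≤ x i) (k : ℕ) :
    (s.val.map x).esymm k / (#s).choose k ≤ ((∑ i ∈ s, x i) / #s) ^ k := by
  induction k with
  | zero => simp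
  | succ k ih =>
    have hmean : 0 ≤ (∑ i ∈ s, x i) / #s := div_nonneg (sum_nonneg hx) (Nat.cast_nonneg _)
    calc (s.val.map x).esymm (k + 1) / (#s).choose (k + 1)
        ≤ (∑ i ∈ s, x i) / #s * ((s.val.map x).esymm k / (#s).choose k) :=
          esymm_map_val_succ_div_choose_le hx k
      _ ≤ (∑ i ∈ s, x i) / #s * ((∑ i ∈ s, x i) / #s) ^ k :=
          mul_le_mul_of_nonneg_left ih hmean
      _ = ((∑ i ∈ s, x i) / #s) ^ (k + 1) := (pow_succ' _ _).symm

end LinearOrderedField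

end Finset

theorem sum_Icc_inv_sub_add_one_eq_harmonic (d : ℕ) :
    ∑ i ∈ Icc 1 d, (((d - i + 1 : ℕ) : ℝ))⁻¹ = harmonic d := by
  rw [harmonic, Rat.cast_sum]
  push_cast
  refine sum_nbij' (fun i ↦ d - i) (fun j ↦ d - j) ?_ ?_ ?_ ?_ fun i _ ↦ rfl <;>
    intro i hi <;> simp only [mem_Icc, mem_range] at hi ⊢ <;> omega

theorem stmt_5_general (d k : ℕ) :
    (∑ s ∈ (Finset.Icc 1 d).powersetCard k,
        (1 : ℝ) / (d * ∏ i ∈ s, ((d - i + 1 : ℕ) : ℝ))) / (d.choose k : ℝ)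
      ≤ (1 / d) * ((1 + Real.log d) / d) ^ k := by
  set x : ℕ → ℝ := fun i ↦ ((d - i + 1 : ℕ) : ℝ)⁻¹
  have hsum : ∑ s ∈ (Icc 1 d).powersetCard k, (1 : ℝ) / (d * ∏ i ∈ s, ((d - i + 1 : ℕ) : ℝ))
      = 1 / d * ((Icc 1 d).val.map x).esymm k := by
    simp [esymm_map_val, mul_sum, x, prod_inv_distrib, mul_comm]
  have hmaclaurin := esymm_map_val_div_choose_le_pow (s := Icc 1 d) (x := x)
    (fun _ _ ↦ by positivity) k
  rw [Nat.card_Icc, Nat.add_sub_cancel] at hmaclaurin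
  calc _ = 1 / d * (((Icc 1 d).val.map x).esymm k / d.choose k) := by rw [hsum, mul_div_assoc]
    _ ≤ 1 / d * ((∑ i ∈ Icc 1 d, x i) / d) ^ k := by gcongr
    _ ≤ 1 / d * ((1 + Real.log d) / d) ^ k := by
        gcongr
        rw [sum_Icc_inv_sub_add_one_eq_harmonic]
        exact harmonic_le_one_add_log d

/-- For a uniformly random `k`-subset `{i_1 < ... < i_k}` of `{1,...,d}` and
`F = 1/(d·∏_j (d - i_j + 1))`, we have `E[F] ≤ (1/d)·((1 + log d)/d)^k`. -/
theorem stmt_5 (d k : ℕ) (hd : 1 ≤ d) (hk1 : 1 ≤ k) (hkd : k ≤ d) :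
    (∑ s ∈ (Finset.Icc 1 d).powersetCard k,
        (1 : ℝ) / (d * ∏ i ∈ s, ((d - i + 1 : ℕ) : ℝ))) / (d.choose k : ℝ)
      ≤ (1 / d) * ((1 + Real.log d) / d) ^ k :=
  stmt_5_general d k
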